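/- Let ϖ ∈ X be a dominant weight and suppose there is a simple root α_j with (ϖ, α_j∨) > 1. Let λ = wϖ with w ∈ W of minimal length such that λ = wϖ. Let μ ∈ w(ϖ − ω_j) + Wω_j (i.e. μ = w(ϖ − ω_j) + z ω_j for some z ∈ W). Then (μ,μ) ≤ (ϖ,ϖ); and if (μ,μ) = (ϖ,ϖ), then μ = vϖ for some v ∈ W with v ≥ w in the Bruhat order. Consequently μ ≤_a λ. -/

import Mathlib

open scoped InnerProductSpace Classical

noncomputable section

/-- A reduced crystallographic root system `Φ` spanning a finite-dimensional real inner
product space `V`, together with a choice of simple roots `π` (determining the positive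
system), the corresponding fundamental weights `ω`, the reflections `s`, the Weyl group
`W` and the weight lattice `X`. -/
structure RootSystemData (V : Type) [NormedAddCommGroup V] [InnerProductSpace ℝ V]
    [FiniteDimensional ℝ V] where
  /-- the (finite) set of roots -/
  Φ : Finset V
  /-- the rank -/
  r : ℕ
  /-- the simple roots `α₁, …, α_r` -/
  π : Fin r → V
  /-- the fundamental weights `ω₁, …, ω_r` -/
  ω : Fin r → V
  /-- the orthogonal reflection attached to a root -/
  s : V → (V ≃ₗ[ℝ] V)
  /-- the Weyl group -/
  W : Subgroup (V ≃ₗ[ℝ] V)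
  /-- the weight lattice -/
  X : AddSubgroup V
  root_ne_zero : ∀ α ∈ Φ, α ≠ (0 : V)
  root_span : Submodule.span ℝ (Φ : Set V) = ⊤
  reduced : ∀ α ∈ Φ, ∀ c : ℝ, c • α ∈ Φ → c = 1 ∨ c = -1
  crystallographic : ∀ α ∈ Φ, ∀ β ∈ Φ, ∃ n : ℤ, 2 * ⟪β, α⟫_ℝ / ⟪α, α⟫_ℝ = (n : ℝ)
  s_apply : ∀ α ∈ Φ, ∀ v : V, s α v = v - (2 * ⟪v, α⟫_ℝ / ⟪α, α⟫_ℝ) • α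
  refl_stable : ∀ α ∈ Φ, ∀ β ∈ Φ, s α β ∈ Φ
  W_eq : W = Subgroup.closure {g : V ≃ₗ[ℝ] V | ∃ α ∈ Φ, g = s α}
  inner_invariant : ∀ g ∈ W, ∀ u v : V, ⟪g u, g v⟫_ℝ = ⟪u, v⟫_ℝ
  simple_mem : ∀ i, π i ∈ Φ
  simple_indep : LinearIndependent ℝ π
  pos_or_neg : ∀ α ∈ Φ,
      (∃ c : Fin r → ℝ, (∀ i, 0 ≤ c i) ∧ α = ∑ i, c i • π i) ∨
      (∃ c : Fin r → ℝ, (∀ i, 0 ≤ c i) ∧ -α = ∑ i, c i • π i)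
  fund : ∀ i j, 2 * ⟪ω i, π j⟫_ℝ / ⟪π j, π j⟫_ℝ = if i = j then (1 : ℝ) else 0
  X_eq : X = AddSubgroup.closure (Set.range ω)
  X_stable : ∀ g ∈ W, ∀ x ∈ X, g x ∈ X

/-- The pairing `(v, α∨) = 2(v,α)/(α,α)` of a vector with the coroot of `α`. -/
def pairing {V : Type} [NormedAddCommGroup V] [InnerProductSpace ℝ V]
    (v α : V) : ℝ := 2 * ⟪v, α⟫_ℝ / ⟪α, α⟫_ℝ

namespace RootSystemData

variable {V : Type} [NormedAddCommGroup V] [InnerProductSpace ℝ V] [FiniteDimensional ℝ V]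
variable (C : RootSystemData V)

/-- `α` is a nonnegative combination of the simple roots (a positive root, if `α ∈ Φ`). -/
def IsPos (α : V) : Prop := ∃ c : Fin C.r → ℝ, (∀ i, 0 ≤ c i) ∧ α = ∑ i, c i • C.π i

/-- `α` is a nonpositive combination of the simple roots (a negative root, if `α ∈ Φ`). -/
def IsNeg (α : V) : Prop := C.IsPos (-α)

/-- A weight is dominant if it pairs nonnegatively with all simple coroots. -/
def IsDominant (lam : V) : Prop := ∀ i, 0 ≤ pairing lam (C.π i)

/-- The product of the simple reflections along a word. -/
def wordProd (l : List (Fin C.r)) : V ≃ₗ[ℝ] V := (l.map fun i => C.s (C.π i)).prod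

/-- The length of `w`: the least length of an expression of `w` as a product of
simple reflections. -/
def length (w : V ≃ₗ[ℝ] V) : ℕ :=
  sInf {n | ∃ l : List (Fin C.r), l.length = n ∧ C.wordProd l = w}

/-- The (strong) Bruhat order on the Weyl group: `u ≤ v` iff `v` is obtained from `u`
by successively multiplying by reflections, increasing the length at each step. -/
def BruhatLE (u v : V ≃ₗ[ℝ] V) : Prop :=
  Relation.ReflTransGen
    (fun a b => (∃ α ∈ C.Φ, b = a * C.s α) ∧ C.length a < C.length b) u v

/-- The Steinberg weight `e_v = v⁻¹ ⬝ ∑_{i : v⁻¹ α_i < 0} ω_i`. -/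
def steinberg (v : V ≃ₗ[ℝ] V) : V :=
  v⁻¹ (∑ i ∈ Finset.univ.filter (fun i => C.IsNeg (v⁻¹ (C.π i))), C.ω i)

/-- The excellent order on weights: `λ ≤ₑ μ` iff `(λ,λ) < (μ,μ)`, or `λ = wν`, `μ = zν`
for some dominant `ν ∈ X` and `w ≤ z` in the Bruhat order. -/
def ExcLE (lam mu : V) : Prop :=
  ⟪lam, lam⟫_ℝ < ⟪mu, mu⟫_ℝ ∨
    ∃ nu ∈ C.X, C.IsDominant nu ∧
      ∃ w ∈ C.W, ∃ z ∈ C.W, C.BruhatLE w z ∧ lam = w nu ∧ mu = z nu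

/-- The strict excellent order. -/
def ExcLT (lam mu : V) : Prop := C.ExcLE lam mu ∧ lam ≠ mu

/-- The antipodal excellent order: `λ ≤ₐ μ` iff `-λ ≤ₑ -μ`. -/
def AntiLE (lam mu : V) : Prop := C.ExcLE (-lam) (-mu)

/-- The strict antipodal excellent order. -/
def AntiLT (lam mu : V) : Prop := C.AntiLE lam mu ∧ lam ≠ mu

/-- The dominance order: `μ ≤_d ν` iff `ν - μ` is a nonnegative integer combination of
the positive roots. -/
def DomLE (mu nu : V) : Prop :=
  ∃ c : V → ℕ, nu - mu = ∑ α ∈ C.Φ.filter (fun a => C.IsPos a), (c α : ℝ) • α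

theorem omega_mem (i : Fin C.r) : C.ω i ∈ C.X := by
  rw [C.X_eq]; exact AddSubgroup.subset_closure ⟨i, rfl⟩

theorem steinberg_mem {v : V ≃ₗ[ℝ] V} (hv : v ∈ C.W) : C.steinberg v ∈ C.X :=
  C.X_stable _ (inv_mem hv) _ (AddSubgroup.sum_mem _ fun i _ => C.omega_mem i)

/-- The group ring `ℤ[X]` of the weight lattice. -/
abbrev GroupRing := AddMonoidAlgebra ℤ ↥C.X

/-- The basis element `e^λ` of `ℤ[X]`. -/
def expo (x : V) (hx : x ∈ C.X) : C.GroupRing := AddMonoidAlgebra.single ⟨x, hx⟩ 1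

/-- `e^λ`, defined for all `λ : V` (and zero off the lattice). -/
def expoOf (x : V) : C.GroupRing := if hx : x ∈ C.X then C.expo x hx else 0

/-- The coefficient of `e^x` in an element of `ℤ[X]`. -/
def coeff (m : C.GroupRing) (x : ↥C.X) : ℤ := (AddMonoidAlgebra.coeff m : ↥C.X →₀ ℤ) x

/-- The support of an element of `ℤ[X]`. -/
def supp (m : C.GroupRing) : Finset ↥C.X := (AddMonoidAlgebra.coeff m : ↥C.X →₀ ℤ).support

/-- The action of `g ∈ W` on the weight lattice. -/
def actX (g : V ≃ₗ[ℝ] V) (hg : g ∈ C.W) : ↥C.X → ↥C.X :=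
  fun x => ⟨g x, C.X_stable g hg x.1 x.2⟩

/-- The action of `g ∈ W` on `ℤ[X]`, with `e^λ ↦ e^{gλ}`. -/
def wAct (g : V ≃ₗ[ℝ] V) (hg : g ∈ C.W) (m : C.GroupRing) : C.GroupRing :=
  AddMonoidAlgebra.ofCoeff (Finsupp.mapDomain (C.actX g hg) (AddMonoidAlgebra.coeff m))

/-- `m` lies in the invariant subring `ℤ[X]^W`. -/
def IsWInvariant (m : C.GroupRing) : Prop := ∀ g (hg : g ∈ C.W), C.wAct g hg m = m

/-- The parabolic subgroup `W_{Π'}` generated by the simple reflections `s_α, α ∈ Π'`,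
for a subset `Π'` of the simple roots (given by a subset `J` of the index set). -/
def parabolicSubgroup (J : Set (Fin C.r)) : Subgroup (V ≃ₗ[ℝ] V) :=
  Subgroup.closure {g | ∃ i ∈ J, g = C.s (C.π i)}

theorem parabolic_le (J : Set (Fin C.r)) : C.parabolicSubgroup J ≤ C.W := by
  refine (Subgroup.closure_le _).2 ?_
  rintro g ⟨i, _, rfl⟩
  rw [C.W_eq]
  exact Subgroup.subset_closure ⟨C.π i, C.simple_mem i, rfl⟩

/-- `m` lies in the invariant subring `ℤ[X]^H` for a subgroup `H ≤ W`. -/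
def IsInvariantUnder (H : Subgroup (V ≃ₗ[ℝ] V)) (hH : H ≤ C.W) (m : C.GroupRing) : Prop :=
  ∀ g (hg : g ∈ H), C.wAct g (hH hg) m = m

/-- `v` is of minimal length in its coset `v ⬝ W_{Π'}`. -/
def IsMinCosetRep (J : Set (Fin C.r)) (v : V ≃ₗ[ℝ] V) : Prop :=
  v ∈ C.W ∧ ∀ z ∈ C.parabolicSubgroup J, C.length v ≤ C.length (v * z)

/-- The subgroup generated by the simple reflections fixing a given vector. -/
def fixSubgroup (x : V) : Subgroup (V ≃ₗ[ℝ] V) :=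
  Subgroup.closure {g | ∃ i : Fin C.r, C.s (C.π i) x = x ∧ g = C.s (C.π i)}

end RootSystemData

/-! Write `ϖ = ν + ω_j`, where `ν = ϖ - ω_j` is dominant with `(ν, α_j) > 0`, and
`μ = w (ν + η)` with `η = w⁻¹ z ω_j`. Then `(ϖ,ϖ) - (μ,μ) = 2 (ν, ω_j - η)`, and `ω_j - η` is a
nonnegative combination of simple roots because `ω_j` is dominant; hence `(μ,μ) ≤ (ϖ,ϖ)`.
In case of equality the coefficient of `α_j` in `ω_j - η` vanishes, so `ω_j - η ⊥ ω_j`; as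
`|η| = |ω_j|` this forces `η = ω_j`, i.e. `μ = wϖ = λ`.

That a dominant weight minus any point of its orbit lies in the positive cone is proved by
induction on the number of inversions; this needs that `W` is generated by the simple
reflections and the deletion property of words in them. -/

section InnerProduct

variable {V : Type} [NormedAddCommGroup V] [InnerProductSpace ℝ V]

theorem pairing_sub_left (u v α : V) : pairing (u - v) α = pairing u α - pairing v α := by
  simp only [pairing, inner_sub_left]; ring

theorem pairing_smul_left (c : ℝ) (v α : V) : pairing (c • v) α = c * pairing v α := by
  simp only [pairing, real_inner_smul_left]; ring

theorem pairing_neg_right (v α : V) : pairing v (-α) = -pairing v α := by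
  simp only [pairing, inner_neg_left, inner_neg_right]; ring

theorem inner_add_self_sub_inner_add_self {a b c : V} (h : ⟪b, b⟫_ℝ = ⟪c, c⟫_ℝ) :
    ⟪a + b, a + b⟫_ℝ - ⟪a + c, a + c⟫_ℝ = 2 * ⟪a, b - c⟫_ℝ := by
  rw [real_inner_add_add_self, real_inner_add_add_self, h, inner_sub_right]
  ring

end InnerProduct

namespace RootSystemData

variable {V : Type} [NormedAddCommGroup V] [InnerProductSpace ℝ V] [FiniteDimensional ℝ V]
variable (C : RootSystemData V)

open Finset

theorem root_inner_self_pos {α : V} (hα : α ∈ C.Φ) : 0 < ⟪α, α⟫_ℝ :=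
  real_inner_self_pos.2 (C.root_ne_zero α hα)

theorem pairing_self {α : V} (hα : α ∈ C.Φ) : pairing α α = 2 := by
  rw [pairing, mul_div_assoc, div_self (C.root_inner_self_pos hα).ne', mul_one]

theorem pairing_nonneg_iff {α : V} (hα : α ∈ C.Φ) (v : V) :
    0 ≤ pairing v α ↔ 0 ≤ ⟪v, α⟫_ℝ := by
  rw [pairing, le_div_iff₀ (C.root_inner_self_pos hα), zero_mul]
  constructor <;> intro h <;> linarith

theorem pairing_pos_iff {α : V} (hα : α ∈ C.Φ) (v : V) : 0 < pairing v α ↔ 0 < ⟪v, α⟫_ℝ := by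
  rw [pairing, lt_div_iff₀ (C.root_inner_self_pos hα), zero_mul]
  constructor <;> intro h <;> linarith

theorem one_le_pairing {α β : V} (hα : α ∈ C.Φ) (hβ : β ∈ C.Φ) (h : 0 < ⟪β, α⟫_ℝ) :
    1 ≤ pairing β α := by
  obtain ⟨n, hn⟩ := C.crystallographic α hα β hβ
  have hpos : (0 : ℝ) < n := hn ▸ (C.pairing_pos_iff hα β).2 h
  rw [pairing, hn]
  exact_mod_cast (Int.cast_pos.1 hpos : 0 < n)

theorem isDominant_iff {v : V} : C.IsDominant v ↔ ∀ i, 0 ≤ ⟪v, C.π i⟫_ℝ :=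
  forall_congr' fun i => C.pairing_nonneg_iff (C.simple_mem i) v

theorem isDominant_ω (i : Fin C.r) : C.IsDominant (C.ω i) := fun k => by
  rw [pairing, C.fund]; split_ifs <;> norm_num

theorem pairing_sub_ω (v : V) (i j : Fin C.r) :
    pairing (v - C.ω j) (C.π i) = pairing v (C.π i) - if j = i then 1 else 0 := by
  rw [pairing_sub_left, ← C.fund]; rfl

theorem eq_of_inner_ω_π_pos {i j : Fin C.r} (h : 0 < ⟪C.ω j, C.π i⟫_ℝ) : j = i := by
  by_contra hji
  have := (C.pairing_pos_iff (C.simple_mem i) _).2 h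
  rw [pairing, C.fund, if_neg hji] at this
  exact this.false

theorem s_apply_eq {α : V} (hα : α ∈ C.Φ) (v : V) : C.s α v = v - pairing v α • α :=
  C.s_apply α hα v

theorem s_apply_self {α : V} (hα : α ∈ C.Φ) : C.s α α = -α := by
  rw [C.s_apply_eq hα, C.pairing_self hα, two_smul]; abel

theorem s_s {α : V} (hα : α ∈ C.Φ) (v : V) : C.s α (C.s α v) = v := by
  rw [C.s_apply_eq hα (C.s α v), C.s_apply_eq hα v, pairing_sub_left, pairing_smul_left,
    C.pairing_self hα]
  module

theorem s_mul_self {α : V} (hα : α ∈ C.Φ) : C.s α * C.s α = 1 :=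
  LinearEquiv.ext (C.s_s hα)

theorem s_inv {α : V} (hα : α ∈ C.Φ) : (C.s α)⁻¹ = C.s α :=
  inv_eq_of_mul_eq_one_right (C.s_mul_self hα)

theorem s_mem {α : V} (hα : α ∈ C.Φ) : C.s α ∈ C.W := by
  rw [C.W_eq]; exact Subgroup.subset_closure ⟨α, hα, rfl⟩

theorem inner_s_left {α : V} (hα : α ∈ C.Φ) (u v : V) : ⟪C.s α u, v⟫_ℝ = ⟪u, C.s α v⟫_ℝ := by
  rw [← C.inner_invariant _ (C.s_mem hα), C.s_s hα]

theorem apply_mem_Φ {g : V ≃ₗ[ℝ] V} (hg : g ∈ C.W) {α : V} (hα : α ∈ C.Φ) : g α ∈ C.Φ := by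
  rw [C.W_eq] at hg
  induction hg using Subgroup.closure_induction'' generalizing α with
  | mem _ h => obtain ⟨β, hβ, rfl⟩ := h; exact C.refl_stable β hβ α hα
  | inv_mem _ h => obtain ⟨β, hβ, rfl⟩ := h; rw [C.s_inv hβ]; exact C.refl_stable β hβ α hα
  | one => exact hα
  | mul _ _ _ _ ihx ihy => exact ihx (ihy hα)

theorem neg_mem_Φ {α : V} (hα : α ∈ C.Φ) : -α ∈ C.Φ :=
  C.s_apply_self hα ▸ C.refl_stable α hα α hα

theorem s_neg {α : V} (hα : α ∈ C.Φ) : C.s (-α) = C.s α := by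
  ext v
  rw [C.s_apply_eq (C.neg_mem_Φ hα), C.s_apply_eq hα, pairing_neg_right, neg_smul, smul_neg,
    neg_neg]

theorem s_eq_conj {g : V ≃ₗ[ℝ] V} (hg : g ∈ C.W) {α : V} (hα : α ∈ C.Φ) :
    C.s (g α) = g * C.s α * g⁻¹ := by
  have hpair : ∀ v, pairing v (g α) = pairing (g⁻¹ v) α := fun v => by
    rw [pairing, pairing, ← C.inner_invariant g hg (g⁻¹ v), ← C.inner_invariant g hg α]
    simp
  ext v
  simp [C.s_apply_eq (C.apply_mem_Φ hg hα), C.s_apply_eq hα, hpair]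

theorem isPos_zero : C.IsPos 0 :=
  ⟨0, fun _ => le_rfl, by simp⟩

theorem IsPos.add {C : RootSystemData V} {u v : V} (hu : C.IsPos u) (hv : C.IsPos v) :
    C.IsPos (u + v) := by
  obtain ⟨c, hc, rfl⟩ := hu
  obtain ⟨d, hd, rfl⟩ := hv
  exact ⟨c + d, fun i => add_nonneg (hc i) (hd i), by simp [add_smul, Finset.sum_add_distrib]⟩

theorem IsPos.smul {C : RootSystemData V} {t : ℝ} {v : V} (ht : 0 ≤ t) (hv : C.IsPos v) :
    C.IsPos (t • v) := by
  obtain ⟨c, hc, rfl⟩ := hv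
  exact ⟨t • c, fun i => mul_nonneg ht (hc i), by simp [Finset.smul_sum, smul_smul]⟩

theorem isPos_π (i : Fin C.r) : C.IsPos (C.π i) :=
  ⟨Pi.single i 1, fun k => by by_cases h : k = i <;> simp [h], by simp [Pi.single_apply]⟩

theorem eq_zero_of_isPos_of_isNeg {v : V} (hpos : C.IsPos v) (hneg : C.IsNeg v) : v = 0 := by
  obtain ⟨c, hc, rfl⟩ := hpos
  obtain ⟨d, hd, hsum⟩ := hneg
  have h0 : ∑ i, (c i + d i) • C.π i = 0 := by
    simp only [add_smul, Finset.sum_add_distrib, ← hsum, add_neg_cancel]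
  have hcd := Fintype.linearIndependent_iff.1 C.simple_indep _ h0
  exact Finset.sum_eq_zero fun i _ => by
    rw [show c i = 0 by linarith [hcd i, hc i, hd i], zero_smul]

theorem isPos_or_isNeg {α : V} (hα : α ∈ C.Φ) : C.IsPos α ∨ C.IsNeg α :=
  C.pos_or_neg α hα

theorem not_isNeg_of_isPos {α : V} (hα : α ∈ C.Φ) (hpos : C.IsPos α) : ¬C.IsNeg α :=
  fun hneg => C.root_ne_zero α hα (C.eq_zero_of_isPos_of_isNeg hpos hneg)

theorem IsDominant.inner_nonneg {C : RootSystemData V} {v x : V} (hv : C.IsDominant v)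
    (hx : C.IsPos x) : 0 ≤ ⟪v, x⟫_ℝ := by
  obtain ⟨c, hc, rfl⟩ := hx
  rw [inner_sum]
  exact Finset.sum_nonneg fun i _ => by
    rw [real_inner_smul_right]; exact mul_nonneg (hc i) (C.isDominant_iff.1 hv i)

theorem isPos_s_π {α : V} (hα : α ∈ C.Φ) (hpos : C.IsPos α) (i : Fin C.r) (hne : α ≠ C.π i) :
    C.IsPos (C.s (C.π i) α) := by
  refine (C.isPos_or_isNeg (C.refl_stable _ (C.simple_mem i) α hα)).resolve_right fun hneg => ?_
  obtain ⟨c, hc, rfl⟩ := hpos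
  obtain ⟨d, hd, hsd⟩ := hneg
  set p := pairing (∑ k, c k • C.π k) (C.π i)
  have h0 : ∑ k, (c k + d k - if k = i then p else 0) • C.π k = 0 := by
    simp only [sub_smul, add_smul, ite_smul, zero_smul, Finset.sum_sub_distrib,
      Finset.sum_add_distrib, Finset.sum_ite_eq', Finset.mem_univ, if_true, ← hsd,
      C.s_apply_eq (C.simple_mem i)]
    abel
  -- `α` and `p α_i - α` are both nonnegative combinations, so `α` is a multiple of `α_i`
  have hcoef := Fintype.linearIndependent_iff.1 C.simple_indep _ h0
  have hsingle : ∑ k, c k • C.π k = c i • C.π i := by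
    refine Finset.sum_eq_single i (fun k _ hk => ?_) (by simp)
    have := hcoef k
    rw [if_neg hk] at this
    rw [show c k = 0 by linarith [hc k, hd k], zero_smul]
  rw [hsingle] at hne hα
  rcases C.reduced _ (C.simple_mem i) (c i) hα with h1 | h1
  · exact hne (by rw [h1, one_smul])
  · linarith [hc i]

theorem eq_π_of_isNeg_s_π {α : V} (hα : α ∈ C.Φ) (hpos : C.IsPos α) (i : Fin C.r)
    (hneg : C.IsNeg (C.s (C.π i) α)) : α = C.π i := by
  by_contra hne
  exact C.not_isNeg_of_isPos (C.refl_stable _ (C.simple_mem i) α hα)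
    (C.isPos_s_π hα hpos i hne) hneg

theorem IsPos.mem_span {C : RootSystemData V} {v : V} (hv : C.IsPos v) :
    v ∈ Submodule.span ℝ (Set.range C.π) := by
  obtain ⟨c, -, rfl⟩ := hv
  exact Submodule.sum_mem _ fun i _ => Submodule.smul_mem _ _ (Submodule.subset_span ⟨i, rfl⟩)

theorem span_π_eq_top : Submodule.span ℝ (Set.range C.π) = ⊤ := by
  refine eq_top_iff.2 (C.root_span ▸ Submodule.span_le.2 fun α hα => ?_)
  rcases C.isPos_or_isNeg hα with hpos | hneg
  · exact hpos.mem_span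
  · exact neg_neg α ▸ Submodule.neg_mem _ hneg.mem_span

def simpleBasis : Module.Basis (Fin C.r) ℝ V :=
  .mk C.simple_indep C.span_π_eq_top.ge

def height : V →ₗ[ℝ] ℝ := ∑ k, C.simpleBasis.coord k

theorem simpleBasis_apply (i : Fin C.r) : C.simpleBasis i = C.π i :=
  Module.Basis.mk_apply _ _ i

theorem height_π (i : Fin C.r) : C.height (C.π i) = 1 := by
  rw [← C.simpleBasis_apply]
  simp [height, Finsupp.single_apply]

theorem height_sum_smul_π (c : Fin C.r → ℝ) : C.height (∑ k, c k • C.π k) = ∑ k, c k := by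
  simp [height_π]

theorem height_pos {v : V} (hv : C.IsPos v) (hne : v ≠ 0) : 0 < C.height v := by
  obtain ⟨c, hc, rfl⟩ := hv
  rw [height_sum_smul_π]
  refine (Finset.sum_nonneg fun i _ => hc i).lt_of_ne fun hzero => hne ?_
  have hc0 := (Finset.sum_eq_zero_iff_of_nonneg fun i _ => hc i).1 hzero.symm
  exact Finset.sum_eq_zero fun i hi => by rw [hc0 i hi, zero_smul]

theorem s_π_mem_parabolicSubgroup (i : Fin C.r) : C.s (C.π i) ∈ C.parabolicSubgroup Set.univ :=
  Subgroup.subset_closure ⟨i, Set.mem_univ i, rfl⟩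

theorem exists_apply_π_eq {α : V} (hα : α ∈ C.Φ) (hpos : C.IsPos α) :
    ∃ g ∈ C.parabolicSubgroup Set.univ, ∃ i, g (C.π i) = α := by
  obtain ⟨n, hn⟩ := exists_nat_ge (C.height α)
  induction n generalizing α with
  | zero => exact absurd (C.height_pos hpos (C.root_ne_zero α hα)) (by simpa using hn)
  | succ n ih =>
    obtain ⟨i, hi⟩ : ∃ i, 0 < ⟪α, C.π i⟫_ℝ := by
      by_contra! h
      obtain ⟨c, hc, hαc⟩ := hpos
      have : ⟪α, ∑ k, c k • C.π k⟫_ℝ ≤ 0 := by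
        rw [inner_sum]
        exact Finset.sum_nonpos fun i _ => by
          rw [real_inner_smul_right]; exact mul_nonpos_of_nonneg_of_nonpos (hc i) (h i)
      rw [← hαc] at this
      exact this.not_gt (C.root_inner_self_pos hα)
    by_cases hαi : α = C.π i
    · exact ⟨1, one_mem _, i, hαi.symm⟩
    -- `s_i α = α - p α_i` with `p ≥ 1` is a positive root of smaller height
    have hheight : C.height (C.s (C.π i) α) ≤ n := by
      have hp := C.one_le_pairing (C.simple_mem i) hα hi
      rw [C.s_apply_eq (C.simple_mem i), map_sub, map_smul, height_π, smul_eq_mul, mul_one]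
      push_cast at hn
      linarith
    obtain ⟨g, hg, k, hgk⟩ := ih (C.refl_stable _ (C.simple_mem i) α hα)
      (C.isPos_s_π hα hpos i hαi) hheight
    refine ⟨C.s (C.π i) * g, mul_mem (C.s_π_mem_parabolicSubgroup i) hg, k, ?_⟩
    rw [LinearEquiv.mul_apply, hgk, C.s_s (C.simple_mem i)]

theorem W_le_parabolicSubgroup_univ : C.W ≤ C.parabolicSubgroup Set.univ := by
  have hpos : ∀ α ∈ C.Φ, C.IsPos α → C.s α ∈ C.parabolicSubgroup Set.univ := by
    intro α hα hpos
    obtain ⟨g, hg, i, rfl⟩ := C.exists_apply_π_eq hα hpos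
    rw [C.s_eq_conj (C.parabolic_le _ hg) (C.simple_mem i)]
    exact mul_mem (mul_mem hg (C.s_π_mem_parabolicSubgroup i)) (inv_mem hg)
  rw [C.W_eq, Subgroup.closure_le]
  rintro _ ⟨α, hα, rfl⟩
  rcases C.isPos_or_isNeg hα with h | h
  · exact hpos α hα h
  · exact C.s_neg hα ▸ hpos (-α) (C.neg_mem_Φ hα) h

theorem wordProd_cons (i : Fin C.r) (l : List (Fin C.r)) :
    C.wordProd (i :: l) = C.s (C.π i) * C.wordProd l := by
  simp [wordProd]

theorem wordProd_append (l₁ l₂ : List (Fin C.r)) :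
    C.wordProd (l₁ ++ l₂) = C.wordProd l₁ * C.wordProd l₂ := by
  simp [wordProd]

theorem wordProd_mem (l : List (Fin C.r)) : C.wordProd l ∈ C.W := by
  induction l with
  | nil => exact one_mem _
  | cons i l ih => exact C.wordProd_cons i l ▸ mul_mem (C.s_mem (C.simple_mem i)) ih

theorem exists_wordProd_eq {g : V ≃ₗ[ℝ] V} (hg : g ∈ C.W) : ∃ l, C.wordProd l = g := by
  have hg' := C.W_le_parabolicSubgroup_univ hg
  clear hg
  induction hg' using Subgroup.closure_induction'' with
  | mem _ h => obtain ⟨i, -, rfl⟩ := h; exact ⟨[i], by simp [wordProd]⟩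
  | inv_mem _ h =>
    obtain ⟨i, -, rfl⟩ := h; exact ⟨[i], by simp [wordProd, C.s_inv (C.simple_mem i)]⟩
  | one => exact ⟨[], rfl⟩
  | mul _ _ _ _ ihx ihy =>
    obtain ⟨l₁, rfl⟩ := ihx
    obtain ⟨l₂, rfl⟩ := ihy
    exact ⟨l₁ ++ l₂, C.wordProd_append l₁ l₂⟩

theorem exists_eq_append_of_isNeg (t : List (Fin C.r)) {β : V} (hβ : β ∈ C.Φ)
    (hpos : C.IsPos β) (hneg : C.IsNeg (C.wordProd t β)) :
    ∃ t₁ k t₂, t = t₁ ++ k :: t₂ ∧ C.wordProd t₂ β = C.π k := by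
  induction t with
  | nil => exact absurd hneg (C.not_isNeg_of_isPos hβ hpos)
  | cons k t ih =>
    have htβ := C.apply_mem_Φ (C.wordProd_mem t) hβ
    rcases C.isPos_or_isNeg htβ with htpos | htneg
    · rw [C.wordProd_cons] at hneg
      exact ⟨[], k, t, rfl, C.eq_π_of_isNeg_s_π htβ htpos k hneg⟩
    · obtain ⟨t₁, k', t₂, rfl, h⟩ := ih htneg
      exact ⟨k :: t₁, k', t₂, rfl, h⟩

theorem wordProd_eq_one_of_forall_isPos (l : List (Fin C.r))
    (h : ∀ i, C.IsPos (C.wordProd l (C.π i))) : C.wordProd l = 1 := by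
  induction hn : l.length using Nat.strong_induction_on generalizing l with
  | _ n ih =>
  rcases l.eq_nil_or_concat with rfl | ⟨t, i, rfl⟩
  · rfl
  have hwi : C.wordProd [i] = C.s (C.π i) := by simp [wordProd]
  have hneg : C.IsNeg (C.wordProd t (C.π i)) := by
    simpa [C.wordProd_append, hwi, C.s_apply_self (C.simple_mem i), IsNeg] using h i
  obtain ⟨t₁, k, t₂, rfl, hk⟩ := C.exists_eq_append_of_isNeg t (C.simple_mem i) (C.isPos_π i) hneg
  -- the letter `k` cancels the final `i`, since `s_k = w₂ s_i w₂⁻¹` with `w₂ = wordProd t₂`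
  have hdel : C.wordProd (t₁ ++ k :: t₂ ++ [i]) = C.wordProd (t₁ ++ t₂) := by
    have hsk := hk ▸ C.s_eq_conj (C.wordProd_mem t₂) (C.simple_mem i)
    have hss : ∀ g, C.s (C.π i) * (C.s (C.π i) * g) = g := fun g => by
      rw [← mul_assoc, C.s_mul_self (C.simple_mem i), one_mul]
    simp only [C.wordProd_append, C.wordProd_cons, hsk, mul_assoc, inv_mul_cancel_left, hss]
    rfl
  simp only [List.concat_eq_append] at h hn ⊢
  rw [hdel] at h ⊢
  exact ih _ (by simp [← hn]) _ h rfl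

theorem eq_one_of_forall_isPos {g : V ≃ₗ[ℝ] V} (hg : g ∈ C.W)
    (h : ∀ i, C.IsPos (g (C.π i))) : g = 1 := by
  obtain ⟨l, rfl⟩ := C.exists_wordProd_eq hg
  exact C.wordProd_eq_one_of_forall_isPos l h

theorem card_filter_isPos_s_π_lt (i : Fin C.r) {P : V → Prop} (hi : P (C.π i))
    (hni : ¬P (-C.π i)) :
    #{α ∈ C.Φ | C.IsPos α ∧ P (C.s (C.π i) α)} < #{α ∈ C.Φ | C.IsPos α ∧ P α} := by
  have hmem : C.π i ∈ {α ∈ C.Φ | C.IsPos α ∧ P α} :=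
    mem_filter.2 ⟨C.simple_mem i, C.isPos_π i, hi⟩
  refine lt_of_le_of_lt ?_ (card_erase_lt_of_mem hmem)
  refine card_le_card_of_injOn (C.s (C.π i)) (fun α hα => ?_) (C.s (C.π i)).injective.injOn
  obtain ⟨hαΦ, hαpos, hαP⟩ := mem_filter.1 hα
  have hne : α ≠ C.π i := by
    rintro rfl
    exact hni (C.s_apply_self (C.simple_mem i) ▸ hαP)
  refine mem_erase.2 ⟨fun heq => ?_, mem_filter.2
    ⟨C.refl_stable _ (C.simple_mem i) α hαΦ, C.isPos_s_π hαΦ hαpos i hne, hαP⟩⟩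
  have : α = -C.π i := by
    rw [← C.s_s (C.simple_mem i) α, heq, C.s_apply_self (C.simple_mem i)]
  exact C.not_isNeg_of_isPos hαΦ hαpos (by simpa [this, IsNeg] using C.isPos_π i)

theorem isPos_sub_apply_of_isDominant {lam : V} (hlam : C.IsDominant lam) {y : V ≃ₗ[ℝ] V}
    (hy : y ∈ C.W) : C.IsPos (lam - y lam) := by
  induction hn : #{α ∈ C.Φ | C.IsPos α ∧ C.IsNeg (y α)} using Nat.strong_induction_on
    generalizing y with
  | _ n ih =>
  by_cases hpos : ∀ i, C.IsPos (y (C.π i))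
  · simpa [C.eq_one_of_forall_isPos hy hpos] using C.isPos_zero
  obtain ⟨i, hi⟩ := not_forall.1 hpos
  have hneg : C.IsNeg (y (C.π i)) :=
    (C.isPos_or_isNeg (C.apply_mem_Φ hy (C.simple_mem i))).resolve_left hi
  have hsplit : lam - y lam =
      (lam - (y * C.s (C.π i)) lam) + pairing lam (C.π i) • -y (C.π i) := by
    rw [LinearEquiv.mul_apply, C.s_apply_eq (C.simple_mem i), map_sub, map_smul]
    module
  rw [hsplit]
  refine .add (ih _ ?_ (mul_mem hy (C.s_mem (C.simple_mem i))) rfl) (.smul (hlam i) hneg)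
  exact hn ▸ C.card_filter_isPos_s_π_lt i (P := fun β => C.IsNeg (y β)) hneg
    (by simpa [IsNeg] using hi)

theorem exists_isDominant_apply (x : V) : ∃ g ∈ C.W, C.IsDominant (g x) := by
  induction hn : #{α ∈ C.Φ | C.IsPos α ∧ ⟪x, α⟫_ℝ < 0} using Nat.strong_induction_on
    generalizing x with
  | _ n ih =>
  by_cases hdom : C.IsDominant x
  · exact ⟨1, one_mem _, hdom⟩
  obtain ⟨i, hi⟩ : ∃ i, ⟪x, C.π i⟫_ℝ < 0 := by simpa [isDominant_iff] using hdom
  have hcard : #{α ∈ C.Φ | C.IsPos α ∧ ⟪C.s (C.π i) x, α⟫_ℝ < 0} < n := by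
    simp only [C.inner_s_left (C.simple_mem i)]
    exact hn ▸ C.card_filter_isPos_s_π_lt i (P := fun β => ⟪x, β⟫_ℝ < 0) hi
      (by simp only [inner_neg_right]; linarith)
  obtain ⟨g, hg, hgx⟩ := ih _ hcard _ rfl
  exact ⟨g * C.s (C.π i), mul_mem hg (C.s_mem (C.simple_mem i)), hgx⟩

theorem excLE_refl {x : V} (hx : x ∈ C.X) : C.ExcLE x x := by
  obtain ⟨g, hg, hdom⟩ := C.exists_isDominant_apply x
  refine .inr ⟨g x, C.X_stable g hg x hx, hdom, g⁻¹, inv_mem hg, g⁻¹, inv_mem hg, .refl, ?_, ?_⟩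
    <;> simp

theorem apply_eq_self_of_inner_sub_eq_zero {lam nu : V} (hlam : C.IsDominant lam)
    (hnu : C.IsDominant nu) (hsupp : ∀ i, 0 < ⟪lam, C.π i⟫_ℝ → 0 < ⟪nu, C.π i⟫_ℝ)
    {y : V ≃ₗ[ℝ] V} (hy : y ∈ C.W) (h : ⟪nu, lam - y lam⟫_ℝ = 0) : y lam = lam := by
  obtain ⟨c, hc, hsum⟩ := C.isPos_sub_apply_of_isDominant hlam hy
  rw [hsum, inner_sum] at h
  simp only [real_inner_smul_right] at h
  have hterm := (Finset.sum_eq_zero_iff_of_nonneg fun i _ =>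
    mul_nonneg (hc i) (C.isDominant_iff.1 hnu i)).1 h
  -- every `α_i` occurring in `λ - yλ` is orthogonal to `ν`, hence to `λ`
  have horth : ⟪lam, lam - y lam⟫_ℝ = 0 := by
    rw [hsum, inner_sum]
    refine Finset.sum_eq_zero fun i hi => ?_
    rw [real_inner_smul_right]
    rcases (C.isDominant_iff.1 hlam i).eq_or_lt with h0 | hpos
    · rw [← h0, mul_zero]
    · rw [(mul_eq_zero.1 (hterm i hi)).resolve_right (hsupp i hpos).ne', zero_mul]
  have hnorm : ⟪y lam, y lam⟫_ℝ = ⟪lam, lam⟫_ℝ := C.inner_invariant y hy lam lam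
  have hzero : ⟪lam - y lam, lam - y lam⟫_ℝ = 0 := by
    rw [real_inner_sub_sub_self, hnorm]
    rw [inner_sub_right] at horth
    linarith [real_inner_comm lam (y lam)]
  exact (sub_eq_zero.1 (inner_self_eq_zero.1 hzero)).symm

end RootSystemData

theorem statement_7_general
    {V : Type} [NormedAddCommGroup V] [InnerProductSpace ℝ V] [FiniteDimensional ℝ V]
    (C : RootSystemData V)
    (ϖ lam : V) (hX : ϖ ∈ C.X) (hdom : C.IsDominant ϖ)
    (j : Fin C.r) (hj : 1 < pairing ϖ (C.π j))
    (w : V ≃ₗ[ℝ] V) (hw : w ∈ C.W) (hlam : lam = w ϖ)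
    (μ : V) (z : V ≃ₗ[ℝ] V) (hz : z ∈ C.W) (hμ : μ = w (ϖ - C.ω j) + z (C.ω j)) :
    ⟪μ, μ⟫_ℝ ≤ ⟪ϖ, ϖ⟫_ℝ ∧
    (⟪μ, μ⟫_ℝ = ⟪ϖ, ϖ⟫_ℝ → ∃ v ∈ C.W, C.BruhatLE w v ∧ μ = v ϖ) ∧
    C.AntiLE μ lam := by
  set ν := ϖ - C.ω j
  set η := (w⁻¹ * z) (C.ω j)
  have hy : w⁻¹ * z ∈ C.W := mul_mem (inv_mem hw) hz
  have hνdom : C.IsDominant ν := fun i => by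
    rw [C.pairing_sub_ω]; split_ifs with h <;> [linarith [h ▸ hj]; linarith [hdom i]]
  have hμν : μ = w (ν + η) := by simp [hμ, η]
  have hgap : ⟪ϖ, ϖ⟫_ℝ - ⟪μ, μ⟫_ℝ = 2 * ⟪ν, C.ω j - η⟫_ℝ := by
    rw [hμν, C.inner_invariant w hw, show ϖ = ν + C.ω j by simp [ν]]
    exact inner_add_self_sub_inner_add_self (C.inner_invariant _ hy _ _).symm
  have hgap_nonneg : 0 ≤ ⟪ν, C.ω j - η⟫_ℝ :=
    hνdom.inner_nonneg (C.isPos_sub_apply_of_isDominant (C.isDominant_ω j) hy)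
  have hμlam : ⟪μ, μ⟫_ℝ = ⟪ϖ, ϖ⟫_ℝ → μ = lam := fun heq => by
    have hsupp : ∀ i, 0 < ⟪C.ω j, C.π i⟫_ℝ → 0 < ⟪ν, C.π i⟫_ℝ := fun i hi => by
      obtain rfl := C.eq_of_inner_ω_π_pos hi
      refine (C.pairing_pos_iff (C.simple_mem j) ν).1 ?_
      rw [C.pairing_sub_ω, if_pos rfl]
      linarith
    have hfix : η = C.ω j := C.apply_eq_self_of_inner_sub_eq_zero (C.isDominant_ω j) hνdom
      hsupp hy (by linarith)
    rw [hμν, hfix, sub_add_cancel, hlam]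
  refine ⟨by linarith, fun heq => ⟨w, hw, .refl, (hμlam heq).trans hlam⟩, ?_⟩
  rcases (by linarith : ⟪μ, μ⟫_ℝ ≤ ⟪ϖ, ϖ⟫_ℝ).lt_or_eq with hlt | heq
  · refine .inl ?_
    rwa [inner_neg_neg, inner_neg_neg, hlam, C.inner_invariant w hw]
  · rw [hμlam heq]
    exact C.excLE_refl (neg_mem (hlam ▸ C.X_stable w hw ϖ hX))

/-- Let `ϖ ∈ X` be dominant with `(ϖ, α_j∨) > 1` for some simple `α_j`, and
let `λ = wϖ` with `w` of minimal length.  Then every `μ ∈ w(ϖ - ω_j) + Wω_j` satisfies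
`(μ,μ) ≤ (ϖ,ϖ)`; if `(μ,μ) = (ϖ,ϖ)` then `μ = vϖ` for some `v ≥ w`; and consequently
`μ ≤ₐ λ`. -/
theorem statement_7
    {V : Type} [NormedAddCommGroup V] [InnerProductSpace ℝ V] [FiniteDimensional ℝ V]
    (C : RootSystemData V)
    (ϖ lam : V) (hX : ϖ ∈ C.X) (hdom : C.IsDominant ϖ)
    (j : Fin C.r) (hj : 1 < pairing ϖ (C.π j))
    (w : V ≃ₗ[ℝ] V) (hw : w ∈ C.W) (hlam : lam = w ϖ)
    (hmin : ∀ u ∈ C.W, u ϖ = lam → C.length w ≤ C.length u)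
    (μ : V) (z : V ≃ₗ[ℝ] V) (hz : z ∈ C.W) (hμ : μ = w (ϖ - C.ω j) + z (C.ω j)) :
    ⟪μ, μ⟫_ℝ ≤ ⟪ϖ, ϖ⟫_ℝ ∧
    (⟪μ, μ⟫_ℝ = ⟪ϖ, ϖ⟫_ℝ → ∃ v ∈ C.W, C.BruhatLE w v ∧ μ = v ϖ) ∧
    C.AntiLE μ lam :=
  statement_7_general C ϖ lam hX hdom j hj w hw hlam μ z hz hμ
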